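/- Let T, S, X, Y be A-bounded operators on H admitting A-adjoints Ts, Ss, Xs, Ys (i.e. A∘Ts = T*∘A, A∘Ss = S*∘A, A∘Xs = X*∘A, A∘Ys = Y*∘A). Then w_𝔸([[T,X],[Y,S]])² ≤ w_𝔸([[0,X],[Y,0]])² + w_𝔸([[0,X∘S],[Y∘T,0]]) + max{w_A(T)², w_A(S)²} + (1/2)·max{‖Ts∘T + X∘Xs‖_A, ‖Ss∘S + Y∘Ys‖_A}. -/

import Mathlib

noncomputable def sInner {E : Type*} [NormedAddCommGroup E] [InnerProductSpace ℂ E]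
    (A : E →L[ℂ] E) (x y : E) : ℂ := inner ℂ (A x) y

noncomputable def sNorm {E : Type*} [NormedAddCommGroup E] [InnerProductSpace ℂ E]
    (A : E →L[ℂ] E) (x : E) : ℝ := Real.sqrt (sInner A x x).re

/-- The `A`-operator seminorm. -/
noncomputable def opSNorm {E : Type*} [NormedAddCommGroup E] [InnerProductSpace ℂ E]
    (A T : E →L[ℂ] E) : ℝ := sSup {c | ∃ x : E, sNorm A x = 1 ∧ c = sNorm A (T x)}

/-- The `A`-numerical radius. -/
noncomputable def numRad {E : Type*} [NormedAddCommGroup E] [InnerProductSpace ℂ E]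
    (A T : E →L[ℂ] E) : ℝ := sSup {c | ∃ x : E, sNorm A x = 1 ∧ c = ‖sInner A (T x) x‖}

/-- `T` is `A`-bounded. -/
def ABounded {E : Type*} [NormedAddCommGroup E] [InnerProductSpace ℂ E]
    (A T : E →L[ℂ] E) : Prop := ∃ c > 0, ∀ x : E, sNorm A (T x) ≤ c * sNorm A x

/-- The 2×2 block operator `[[T, X], [Y, S]]` on `H ⊕ H` (with the ℓ² product structure). -/
noncomputable def blk {H : Type*} [NormedAddCommGroup H] [InnerProductSpace ℂ H]
    (T X Y S : H →L[ℂ] H) : WithLp 2 (H × H) →L[ℂ] WithLp 2 (H × H) :=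
  ((WithLp.prodContinuousLinearEquiv 2 ℂ H H).symm.toContinuousLinearMap.comp
    (((T.coprod X).prod (Y.coprod S)).comp
      (WithLp.prodContinuousLinearEquiv 2 ℂ H H).toContinuousLinearMap))

/-- The diagonal operator `𝔸 = diag(A, A)` on `H ⊕ H`. -/
noncomputable def twoA {H : Type*} [NormedAddCommGroup H] [InnerProductSpace ℂ H]
    (A : H →L[ℂ] H) : WithLp 2 (H × H) →L[ℂ] WithLp 2 (H × H) := blk A 0 0 A

/-!
Split `M = [[T, X], [Y, S]]` as `C + D` with `C = [[0, X], [Y, 0]]` and `D = [[T, 0], [0, S]]`,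
and let `‖z‖_𝔸 = 1`. Then `|⟨Mz, z⟩_𝔸|² ≤ |⟨Cz, z⟩_𝔸|² + 2 |⟨Cz, z⟩_𝔸| |⟨Dz, z⟩_𝔸| + |⟨Dz, z⟩_𝔸|²`,
and the outer terms are at most `w_𝔸(C)²` and `max (w_A(T)², w_A(S)²)`. For the cross term,
`C♯ = [[0, Ys], [Xs, 0]]` is an `𝔸`-adjoint of `C`, so `⟨Cz, z⟩_𝔸 = ⟨z, C♯z⟩_𝔸` and
`⟨Dz, C♯z⟩_𝔸 = ⟨CDz, z⟩_𝔸` with `CD = [[0, XS], [YT, 0]]`. Buzano's inequality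
`2 |⟨a, e⟩ ⟨e, b⟩| ≤ ‖a‖ ‖b‖ + |⟨a, b⟩|` for `e = z`, `a = Dz`, `b = C♯z` bounds the cross term by
`(‖Dz‖²_𝔸 + ‖C♯z‖²_𝔸) / 2 + w_𝔸(CD)`, and
`‖Dz‖²_𝔸 + ‖C♯z‖²_𝔸 = Re ⟨(TsT + XXs) z₁, z₁⟩_A + Re ⟨(SsS + YYs) z₂, z₂⟩_A`.
All seminorm inequalities are obtained from `⟨x, y⟩_A = ⟨A^{1/2} x, A^{1/2} y⟩`.
-/

open ContinuousLinearMap ComplexConjugate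
open scoped InnerProductSpace

section Buzano
variable {E : Type*} [NormedAddCommGroup E] [InnerProductSpace ℂ E]

theorem two_mul_norm_inner_mul_inner_le {e : E} (he : ‖e‖ = 1) (a b : E) :
    2 * ‖⟪a, e⟫_ℂ * ⟪e, b⟫_ℂ‖ ≤ ‖a‖ * ‖b‖ + ‖⟪a, b⟫_ℂ‖ := by
  -- `r` is the reflection of `a` in the line `ℂ e`, hence has the same norm as `a`
  set r : E := (2 * ⟪e, a⟫_ℂ) • e - a with hr
  have hnorm : ‖r‖ = ‖a‖ := by
    have hre : conj (2 * ⟪e, a⟫_ℂ) * ⟪e, a⟫_ℂ = ((2 * ‖⟪e, a⟫_ℂ‖ ^ 2 : ℝ) : ℂ) := by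
      rw [map_mul, map_ofNat, mul_assoc, Complex.conj_mul']; push_cast; ring
    have : ‖r‖ ^ 2 = ‖a‖ ^ 2 := by
      rw [hr, @norm_sub_sq ℂ, norm_smul, he, inner_smul_left, hre, RCLike.re_to_complex,
        Complex.ofReal_re, norm_mul]
      norm_num; ring
    exact (sq_eq_sq₀ (norm_nonneg _) (norm_nonneg _)).1 this
  have hrb : 2 * (⟪a, e⟫_ℂ * ⟪e, b⟫_ℂ) = ⟪r, b⟫_ℂ + ⟪a, b⟫_ℂ := by
    rw [hr, inner_sub_left, inner_smul_left, map_mul, map_ofNat, inner_conj_symm]; ring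
  calc 2 * ‖⟪a, e⟫_ℂ * ⟪e, b⟫_ℂ‖ = ‖⟪r, b⟫_ℂ + ⟪a, b⟫_ℂ‖ := by
        rw [← hrb, norm_mul (2 : ℂ), Complex.norm_two]
    _ ≤ ‖r‖ * ‖b‖ + ‖⟪a, b⟫_ℂ‖ := by
        grw [norm_add_le, norm_inner_le_norm]
    _ = ‖a‖ * ‖b‖ + ‖⟪a, b⟫_ℂ‖ := by rw [hnorm]

end Buzano

section SemiInner
variable {E : Type*} [NormedAddCommGroup E] [InnerProductSpace ℂ E] {B T : E →L[ℂ] E}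

lemma sNorm_nonneg (B : E →L[ℂ] E) (x : E) : 0 ≤ sNorm B x := Real.sqrt_nonneg _

lemma sNorm_sq (hB : B.IsPositive) (x : E) : sNorm B x ^ 2 = (sInner B x x).re :=
  Real.sq_sqrt (hB.re_inner_nonneg_left x)

lemma sInner_add_left (B : E →L[ℂ] E) (x y z : E) :
    sInner B (x + y) z = sInner B x z + sInner B y z := by
  rw [sInner, map_add, inner_add_left, sInner, sInner]

lemma sInner_add_right (B : E →L[ℂ] E) (x y z : E) :
    sInner B x (y + z) = sInner B x y + sInner B x z :=
  inner_add_right _ _ _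

lemma numRad_nonneg (B T : E →L[ℂ] E) : 0 ≤ numRad B T :=
  Real.sSup_nonneg (by rintro c ⟨x, -, rfl⟩; exact norm_nonneg _)

lemma opSNorm_nonneg (B T : E →L[ℂ] E) : 0 ≤ opSNorm B T :=
  Real.sSup_nonneg (by rintro c ⟨x, -, rfl⟩; exact sNorm_nonneg _ _)

lemma numRad_sq_le {M : ℝ} (hM : 0 ≤ M) (h : ∀ x, sNorm B x = 1 → ‖sInner B (T x) x‖ ^ 2 ≤ M) :
    numRad B T ^ 2 ≤ M := by
  have hle : numRad B T ≤ √M := Real.sSup_le (by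
    rintro c ⟨x, hx, rfl⟩
    exact Real.le_sqrt_of_sq_le (h x hx)) (Real.sqrt_nonneg M)
  calc numRad B T ^ 2 ≤ √M ^ 2 := by gcongr; exact numRad_nonneg B T
    _ = M := Real.sq_sqrt hM

lemma ABounded.comp {S : E →L[ℂ] E} (hT : ABounded B T) (hS : ABounded B S) :
    ABounded B (T.comp S) := by
  obtain ⟨c, hc, hTc⟩ := hT
  obtain ⟨d, hd, hSd⟩ := hS
  refine ⟨c * d, mul_pos hc hd, fun x => ?_⟩
  calc sNorm B (T (S x)) ≤ c * sNorm B (S x) := hTc _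
    _ ≤ c * (d * sNorm B x) := by gcongr; exact hSd x
    _ = c * d * sNorm B x := by ring

variable [CompleteSpace E]

lemma sInner_eq_inner_sqrt (hB : B.IsPositive) (x y : E) :
    sInner B x y = ⟪CFC.sqrt B x, CFC.sqrt B y⟫_ℂ := by
  have hB0 : 0 ≤ B := (nonneg_iff_isPositive B).2 hB
  have hsqrt : (CFC.sqrt B).IsPositive := (nonneg_iff_isPositive _).1 (CFC.sqrt_nonneg B)
  rw [hsqrt.inner_left_eq_inner_right, ← mul_apply_eq_comp,
    CFC.sqrt_mul_sqrt_self B hB0, ← hB.inner_left_eq_inner_right, sInner]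

lemma sNorm_eq_norm_sqrt (hB : B.IsPositive) (x : E) : sNorm B x = ‖CFC.sqrt B x‖ := by
  rw [sNorm, sInner_eq_inner_sqrt hB, ← RCLike.re_to_complex, inner_self_eq_norm_sq (𝕜 := ℂ),
    Real.sqrt_sq (norm_nonneg _)]

lemma norm_sInner_le (hB : B.IsPositive) (x y : E) : ‖sInner B x y‖ ≤ sNorm B x * sNorm B y := by
  rw [sInner_eq_inner_sqrt hB, sNorm_eq_norm_sqrt hB, sNorm_eq_norm_sqrt hB]
  exact norm_inner_le_norm _ _

lemma sNorm_add_le (hB : B.IsPositive) (x y : E) : sNorm B (x + y) ≤ sNorm B x + sNorm B y := by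
  simp only [sNorm_eq_norm_sqrt hB, map_add]
  exact norm_add_le _ _

lemma sNorm_smul (hB : B.IsPositive) (c : ℂ) (x : E) : sNorm B (c • x) = ‖c‖ * sNorm B x := by
  simp only [sNorm_eq_norm_sqrt hB, map_smul, norm_smul]

lemma two_mul_norm_sInner_mul_sInner_le (hB : B.IsPositive) {e : E} (he : sNorm B e = 1)
    (a b : E) : 2 * ‖sInner B a e * sInner B e b‖ ≤ sNorm B a * sNorm B b + ‖sInner B a b‖ := by
  rw [sNorm_eq_norm_sqrt hB] at he
  simp only [sInner_eq_inner_sqrt hB, sNorm_eq_norm_sqrt hB]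
  exact two_mul_norm_inner_mul_inner_le he _ _

lemma ABounded.add (hB : B.IsPositive) {S : E →L[ℂ] E} (hT : ABounded B T) (hS : ABounded B S) :
    ABounded B (T + S) := by
  obtain ⟨c, hc, hTc⟩ := hT
  obtain ⟨d, hd, hSd⟩ := hS
  refine ⟨c + d, add_pos hc hd, fun x => ?_⟩
  calc sNorm B (T x + S x) ≤ sNorm B (T x) + sNorm B (S x) := sNorm_add_le hB _ _
    _ ≤ c * sNorm B x + d * sNorm B x := add_le_add (hTc x) (hSd x)
    _ = (c + d) * sNorm B x := by ring

lemma le_mul_sNorm_pow_of_homogeneous (hB : B.IsPositive) {f : E → ℝ} {M : ℝ} {k : ℕ}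
    (hk : k ≠ 0) (hf : ∀ (c : ℝ) x, 0 < c → f ((c : ℂ) • x) = c ^ k * f x)
    (h₀ : ∀ x, sNorm B x = 0 → f x ≤ 0) (h₁ : ∀ x, sNorm B x = 1 → f x ≤ M) (x : E) :
    f x ≤ M * sNorm B x ^ k := by
  rcases (sNorm_nonneg B x).eq_or_lt with hx | hx
  · rw [← hx, zero_pow hk, mul_zero]
    exact h₀ x hx.symm
  set u : E := (((sNorm B x)⁻¹ : ℝ) : ℂ) • x
  have hu : sNorm B u = 1 := by
    rw [sNorm_smul hB, Complex.norm_real, Real.norm_of_nonneg (inv_nonneg.2 hx.le),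
      inv_mul_cancel₀ hx.ne']
  have hxu : x = ((sNorm B x : ℝ) : ℂ) • u := by
    rw [smul_smul, ← Complex.ofReal_mul, mul_inv_cancel₀ hx.ne', Complex.ofReal_one, one_smul]
  rw [hxu, hf _ _ hx, ← hxu, mul_comm M]
  exact mul_le_mul_of_nonneg_left (h₁ u hu) (pow_nonneg hx.le k)

lemma ABounded.norm_sInner_le_numRad (hB : B.IsPositive) (hT : ABounded B T) (x : E) :
    ‖sInner B (T x) x‖ ≤ numRad B T * sNorm B x ^ 2 := by
  obtain ⟨c, -, hTc⟩ := hT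
  refine le_mul_sNorm_pow_of_homogeneous (f := fun y => ‖sInner B (T y) y‖) hB two_ne_zero
    (fun r y hr => ?_) (fun y hy => ?_) (fun y hy => ?_) x
  · rw [map_smul, sInner, map_smul, inner_smul_left, inner_smul_right, norm_mul, norm_mul,
      RCLike.norm_conj, Complex.norm_real, Real.norm_of_nonneg hr.le, sInner]
    ring
  · simpa [hy] using norm_sInner_le hB (T y) y
  · refine le_csSup ⟨c, ?_⟩ ⟨y, hy, rfl⟩
    rintro _ ⟨z, hz, rfl⟩
    calc ‖sInner B (T z) z‖ ≤ sNorm B (T z) * sNorm B z := norm_sInner_le hB _ _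
      _ ≤ c := by simpa [hz] using hTc z

lemma ABounded.sNorm_le_opSNorm (hB : B.IsPositive) (hT : ABounded B T) (x : E) :
    sNorm B (T x) ≤ opSNorm B T * sNorm B x := by
  obtain ⟨c, -, hTc⟩ := hT
  refine (le_mul_sNorm_pow_of_homogeneous (f := fun y => sNorm B (T y)) hB one_ne_zero
    (fun r y hr => ?_) (fun y hy => ?_) (fun y hy => ?_) x).trans_eq (by rw [pow_one])
  · rw [map_smul, sNorm_smul hB, Complex.norm_real, Real.norm_of_nonneg hr.le, pow_one]
  · simpa [hy] using hTc y
  · refine le_csSup ⟨c, ?_⟩ ⟨y, hy, rfl⟩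
    rintro _ ⟨z, hz, rfl⟩
    simpa [hz] using hTc z

lemma ABounded.re_sInner_le_opSNorm (hB : B.IsPositive) (hT : ABounded B T) (x : E) :
    (sInner B (T x) x).re ≤ opSNorm B T * sNorm B x ^ 2 :=
  calc (sInner B (T x) x).re ≤ ‖sInner B (T x) x‖ := Complex.re_le_norm _
    _ ≤ sNorm B (T x) * sNorm B x := norm_sInner_le hB _ _
    _ ≤ opSNorm B T * sNorm B x * sNorm B x := by
        gcongr; exacts [sNorm_nonneg _ _, hT.sNorm_le_opSNorm hB x]
    _ = opSNorm B T * sNorm B x ^ 2 := by ring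

end SemiInner

section Adjoint
variable {H : Type*} [NormedAddCommGroup H] [InnerProductSpace ℂ H] [CompleteSpace H]
  {A T Ts : H →L[ℂ] H}

lemma sInner_adjoint_left (hTs : A.comp Ts = (adjoint T).comp A) (u v : H) :
    sInner A (Ts u) v = sInner A u (T v) := by
  rw [sInner, ← comp_apply, hTs, comp_apply, adjoint_inner_left, sInner]

lemma sInner_adjoint_right (hA : A.IsPositive) (hTs : A.comp Ts = (adjoint T).comp A)
    (u v : H) : sInner A u (Ts v) = sInner A (T u) v := by
  rw [sInner, hA.inner_left_eq_inner_right, ← comp_apply A Ts, hTs, comp_apply,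
    adjoint_inner_right, ← hA.inner_left_eq_inner_right, sInner]

lemma sNorm_sq_add_sNorm_adjoint_sq {X Xs : H →L[ℂ] H} (hA : A.IsPositive)
    (hTs : A.comp Ts = (adjoint T).comp A) (hXs : A.comp Xs = (adjoint X).comp A) (x : H) :
    sNorm A (T x) ^ 2 + sNorm A (Xs x) ^ 2 = (sInner A ((Ts.comp T + X.comp Xs) x) x).re := by
  rw [sNorm_sq hA, sNorm_sq hA, ← sInner_adjoint_left hTs, sInner_adjoint_right hA hXs,
    ← Complex.add_re]
  simp only [sInner, add_apply, comp_apply, map_add, inner_add_left]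

lemma ABounded.of_adjoint (hA : A.IsPositive) (hTs : A.comp Ts = (adjoint T).comp A)
    (hT : ABounded A T) : ABounded A Ts := by
  obtain ⟨c, hc, hTc⟩ := hT
  refine ⟨c, hc, fun x => ?_⟩
  have hsq : sNorm A (Ts x) ^ 2 ≤ c * sNorm A x * sNorm A (Ts x) :=
    calc sNorm A (Ts x) ^ 2 = (sInner A x (T (Ts x))).re := by
          rw [sNorm_sq hA, sInner_adjoint_left hTs]
      _ ≤ sNorm A x * sNorm A (T (Ts x)) := (Complex.re_le_norm _).trans (norm_sInner_le hA _ _)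
      _ ≤ sNorm A x * (c * sNorm A (Ts x)) := by gcongr; exacts [sNorm_nonneg _ _, hTc _]
      _ = c * sNorm A x * sNorm A (Ts x) := by ring
  nlinarith [sNorm_nonneg A (Ts x), mul_nonneg hc.le (sNorm_nonneg A x)]

end Adjoint

section Block
variable {H : Type*} [NormedAddCommGroup H] [InnerProductSpace ℂ H] {A : H →L[ℂ] H}

@[simp] lemma blk_fst (T X Y S : H →L[ℂ] H) (z : WithLp 2 (H × H)) :
    (blk T X Y S z).fst = T z.fst + X z.snd := rfl

@[simp] lemma blk_snd (T X Y S : H →L[ℂ] H) (z : WithLp 2 (H × H)) :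
    (blk T X Y S z).snd = Y z.fst + S z.snd := rfl

lemma blk_antidiag_blk_diag (T X Y S : H →L[ℂ] H) (z : WithLp 2 (H × H)) :
    blk 0 X Y 0 (blk T 0 0 S z) = blk 0 (X.comp S) (Y.comp T) 0 z := by
  rw [WithLp.ext_iff]
  ext <;> simp

lemma twoA_sInner (A : H →L[ℂ] H) (u v : WithLp 2 (H × H)) :
    sInner (twoA A) u v = sInner A u.fst v.fst + sInner A u.snd v.snd := by
  simp [sInner, twoA]

lemma twoA_isPositive (hA : A.IsPositive) : (twoA A).IsPositive := by
  refine ⟨fun u v => ?_, fun z => ?_⟩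
  · simp [twoA, hA.inner_left_eq_inner_right]
  · rw [reApplyInnerSelf, ← sInner, twoA_sInner, map_add]
    exact add_nonneg (hA.re_inner_nonneg_left _) (hA.re_inner_nonneg_left _)

lemma twoA_sNorm_sq (hA : A.IsPositive) (u : WithLp 2 (H × H)) :
    sNorm (twoA A) u ^ 2 = sNorm A u.fst ^ 2 + sNorm A u.snd ^ 2 := by
  rw [sNorm_sq (twoA_isPositive hA), sNorm_sq hA, sNorm_sq hA, twoA_sInner, Complex.add_re]

lemma sInner_blk_eq_antidiag_add_diag (A T X Y S : H →L[ℂ] H) (z : WithLp 2 (H × H)) :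
    sInner (twoA A) (blk T X Y S z) z =
      sInner (twoA A) (blk 0 X Y 0 z) z + sInner (twoA A) (blk T 0 0 S z) z := by
  simp only [twoA_sInner, blk_fst, blk_snd, zero_apply, add_zero, zero_add, sInner_add_left]
  ring

lemma ABounded.blk_antidiag {X Y : H →L[ℂ] H} (hA : A.IsPositive) (hX : ABounded A X)
    (hY : ABounded A Y) : ABounded (twoA A) (blk 0 X Y 0) := by
  obtain ⟨c, hc, hXc⟩ := hX
  obtain ⟨d, -, hYd⟩ := hY
  refine ⟨max c d, lt_max_of_lt_left hc, fun z => ?_⟩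
  refine le_of_pow_le_pow_left₀ two_ne_zero
    (mul_nonneg (hc.le.trans (le_max_left _ _)) (sNorm_nonneg _ _)) ?_
  rw [twoA_sNorm_sq hA, mul_pow, twoA_sNorm_sq hA]
  simp only [blk_fst, blk_snd, zero_apply, zero_add, add_zero]
  have hX' : sNorm A (X z.snd) ≤ max c d * sNorm A z.snd :=
    (hXc _).trans (by gcongr; exacts [sNorm_nonneg _ _, le_max_left _ _])
  have hY' : sNorm A (Y z.fst) ≤ max c d * sNorm A z.fst :=
    (hYd _).trans (by gcongr; exacts [sNorm_nonneg _ _, le_max_right _ _])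
  calc sNorm A (X z.snd) ^ 2 + sNorm A (Y z.fst) ^ 2
      ≤ (max c d * sNorm A z.snd) ^ 2 + (max c d * sNorm A z.fst) ^ 2 := by
        gcongr <;> exact sNorm_nonneg _ _
    _ = max c d ^ 2 * (sNorm A z.fst ^ 2 + sNorm A z.snd ^ 2) := by ring

variable [CompleteSpace H]

lemma sInner_blk_adjoint {T X Y S Ts Xs Ys Ss : H →L[ℂ] H} (hA : A.IsPositive)
    (hTs : A.comp Ts = (adjoint T).comp A) (hXs : A.comp Xs = (adjoint X).comp A)
    (hYs : A.comp Ys = (adjoint Y).comp A) (hSs : A.comp Ss = (adjoint S).comp A)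
    (u v : WithLp 2 (H × H)) :
    sInner (twoA A) u (blk Ts Ys Xs Ss v) = sInner (twoA A) (blk T X Y S u) v := by
  simp only [twoA_sInner, blk_fst, blk_snd, sInner_add_left, sInner_add_right,
    sInner_adjoint_right hA hTs, sInner_adjoint_right hA hXs, sInner_adjoint_right hA hYs,
    sInner_adjoint_right hA hSs]
  ring

end Block

section Estimate
variable {H : Type*} [NormedAddCommGroup H] [InnerProductSpace ℂ H] [CompleteSpace H]
  {A T X Y S Ts Xs Ys Ss : H →L[ℂ] H}

lemma norm_sInner_blk_diag_le (hA : A.IsPositive) (hT : ABounded A T) (hS : ABounded A S)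
    (z : WithLp 2 (H × H)) :
    ‖sInner (twoA A) (blk T 0 0 S z) z‖ ≤ max (numRad A T) (numRad A S) * sNorm (twoA A) z ^ 2 :=
  calc ‖sInner (twoA A) (blk T 0 0 S z) z‖
      ≤ ‖sInner A (T z.fst) z.fst‖ + ‖sInner A (S z.snd) z.snd‖ := by
        simpa [twoA_sInner] using norm_add_le _ _
    _ ≤ numRad A T * sNorm A z.fst ^ 2 + numRad A S * sNorm A z.snd ^ 2 :=
        add_le_add (hT.norm_sInner_le_numRad hA _) (hS.norm_sInner_le_numRad hA _)
    _ ≤ max (numRad A T) (numRad A S) * sNorm A z.fst ^ 2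
          + max (numRad A T) (numRad A S) * sNorm A z.snd ^ 2 := by
        gcongr; exacts [le_max_left _ _, le_max_right _ _]
    _ = max (numRad A T) (numRad A S) * sNorm (twoA A) z ^ 2 := by
        rw [twoA_sNorm_sq hA, mul_add]

lemma sNorm_blk_diag_sq_add_sNorm_blk_antidiag_sq_le (hA : A.IsPositive)
    (hTs : A.comp Ts = (adjoint T).comp A) (hSs : A.comp Ss = (adjoint S).comp A)
    (hXs : A.comp Xs = (adjoint X).comp A) (hYs : A.comp Ys = (adjoint Y).comp A)
    (hP : ABounded A (Ts.comp T + X.comp Xs)) (hQ : ABounded A (Ss.comp S + Y.comp Ys))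
    (z : WithLp 2 (H × H)) :
    sNorm (twoA A) (blk T 0 0 S z) ^ 2 + sNorm (twoA A) (blk 0 Ys Xs 0 z) ^ 2 ≤
      max (opSNorm A (Ts.comp T + X.comp Xs)) (opSNorm A (Ss.comp S + Y.comp Ys)) *
        sNorm (twoA A) z ^ 2 := by
  have hfst := sNorm_sq_add_sNorm_adjoint_sq hA hTs hXs z.fst
  have hsnd := sNorm_sq_add_sNorm_adjoint_sq hA hSs hYs z.snd
  calc sNorm (twoA A) (blk T 0 0 S z) ^ 2 + sNorm (twoA A) (blk 0 Ys Xs 0 z) ^ 2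
      = (sInner A ((Ts.comp T + X.comp Xs) z.fst) z.fst).re
          + (sInner A ((Ss.comp S + Y.comp Ys) z.snd) z.snd).re := by
        simp only [twoA_sNorm_sq hA, blk_fst, blk_snd, zero_apply, add_zero, zero_add]
        linarith
    _ ≤ opSNorm A (Ts.comp T + X.comp Xs) * sNorm A z.fst ^ 2
          + opSNorm A (Ss.comp S + Y.comp Ys) * sNorm A z.snd ^ 2 :=
        add_le_add (hP.re_sInner_le_opSNorm hA _) (hQ.re_sInner_le_opSNorm hA _)
    _ ≤ _ := by
        rw [twoA_sNorm_sq hA, mul_add]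
        gcongr; exacts [le_max_left _ _, le_max_right _ _]

lemma two_mul_norm_sInner_blk_antidiag_mul_norm_sInner_blk_diag_le (hA : A.IsPositive)
    (hTs : A.comp Ts = (adjoint T).comp A) (hSs : A.comp Ss = (adjoint S).comp A)
    (hXs : A.comp Xs = (adjoint X).comp A) (hYs : A.comp Ys = (adjoint Y).comp A)
    (hP : ABounded A (Ts.comp T + X.comp Xs)) (hQ : ABounded A (Ss.comp S + Y.comp Ys))
    (hXSYT : ABounded (twoA A) (blk 0 (X.comp S) (Y.comp T) 0))
    {z : WithLp 2 (H × H)} (hz : sNorm (twoA A) z = 1) :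
    2 * (‖sInner (twoA A) (blk 0 X Y 0 z) z‖ * ‖sInner (twoA A) (blk T 0 0 S z) z‖) ≤
      1 / 2 * max (opSNorm A (Ts.comp T + X.comp Xs)) (opSNorm A (Ss.comp S + Y.comp Ys)) +
        numRad (twoA A) (blk 0 (X.comp S) (Y.comp T) 0) := by
  have h𝔸 := twoA_isPositive hA
  have h0 : A.comp (0 : H →L[ℂ] H) = (adjoint (0 : H →L[ℂ] H)).comp A := by simp
  have hbuz := two_mul_norm_sInner_mul_sInner_le h𝔸 hz (blk T 0 0 S z) (blk 0 Ys Xs 0 z)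
  rw [sInner_blk_adjoint hA h0 hXs hYs h0, sInner_blk_adjoint hA h0 hXs hYs h0,
    blk_antidiag_blk_diag, norm_mul, mul_comm ‖_‖] at hbuz
  have hsq := sNorm_blk_diag_sq_add_sNorm_blk_antidiag_sq_le hA hTs hSs hXs hYs hP hQ z
  rw [hz, one_pow, mul_one] at hsq
  have hXSYT' := hXSYT.norm_sInner_le_numRad h𝔸 z
  rw [hz, one_pow, mul_one] at hXSYT'
  nlinarith [sq_nonneg (sNorm (twoA A) (blk T 0 0 S z) - sNorm (twoA A) (blk 0 Ys Xs 0 z))]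

lemma norm_sInner_blk_sq_le (hA : A.IsPositive) (hT : ABounded A T) (hS : ABounded A S)
    (hX : ABounded A X) (hY : ABounded A Y)
    (hTs : A.comp Ts = (adjoint T).comp A) (hSs : A.comp Ss = (adjoint S).comp A)
    (hXs : A.comp Xs = (adjoint X).comp A) (hYs : A.comp Ys = (adjoint Y).comp A)
    {z : WithLp 2 (H × H)} (hz : sNorm (twoA A) z = 1) :
    ‖sInner (twoA A) (blk T X Y S z) z‖ ^ 2 ≤
      numRad (twoA A) (blk 0 X Y 0) ^ 2 + numRad (twoA A) (blk 0 (X.comp S) (Y.comp T) 0) +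
        max (numRad A T ^ 2) (numRad A S ^ 2) +
          1 / 2 * max (opSNorm A (Ts.comp T + X.comp Xs)) (opSNorm A (Ss.comp S + Y.comp Ys)) := by
  have hP := ((hT.of_adjoint hA hTs).comp hT).add hA (hX.comp (hX.of_adjoint hA hXs))
  have hQ := ((hS.of_adjoint hA hSs).comp hS).add hA (hY.comp (hY.of_adjoint hA hYs))
  have hcross := two_mul_norm_sInner_blk_antidiag_mul_norm_sInner_blk_diag_le hA hTs hSs hXs hYs
    hP hQ (ABounded.blk_antidiag hA (hX.comp hS) (hY.comp hT)) hz
  have hoff := (ABounded.blk_antidiag hA hX hY).norm_sInner_le_numRad (twoA_isPositive hA) z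
  have hdiag := norm_sInner_blk_diag_le hA hT hS z
  rw [hz, one_pow, mul_one] at hoff hdiag
  have hdiag_sq : ‖sInner (twoA A) (blk T 0 0 S z) z‖ ^ 2 ≤ max (numRad A T ^ 2) (numRad A S ^ 2) :=
    (le_max_iff.1 hdiag).elim
      (fun h => (pow_le_pow_left₀ (norm_nonneg _) h 2).trans (le_max_left _ _))
      (fun h => (pow_le_pow_left₀ (norm_nonneg _) h 2).trans (le_max_right _ _))
  calc ‖sInner (twoA A) (blk T X Y S z) z‖ ^ 2
      ≤ (‖sInner (twoA A) (blk 0 X Y 0 z) z‖ + ‖sInner (twoA A) (blk T 0 0 S z) z‖) ^ 2 := by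
        rw [sInner_blk_eq_antidiag_add_diag]
        gcongr
        exact norm_add_le _ _
    _ ≤ _ := by nlinarith [norm_nonneg (sInner (twoA A) (blk 0 X Y 0 z) z)]

end Estimate

theorem stmt12 {H : Type*} [NormedAddCommGroup H] [InnerProductSpace ℂ H] [CompleteSpace H]
    (A : H →L[ℂ] H) (hA : A.IsPositive)
    (T S X Y Ts Ss Xs Ys : H →L[ℂ] H)
    (hT : ABounded A T) (hS : ABounded A S) (hX : ABounded A X) (hY : ABounded A Y)
    (hTs : A.comp Ts = (ContinuousLinearMap.adjoint T).comp A)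
    (hSs : A.comp Ss = (ContinuousLinearMap.adjoint S).comp A)
    (hXs : A.comp Xs = (ContinuousLinearMap.adjoint X).comp A)
    (hYs : A.comp Ys = (ContinuousLinearMap.adjoint Y).comp A) :
    (numRad (twoA A) (blk T X Y S)) ^ 2 ≤
      (numRad (twoA A) (blk 0 X Y 0)) ^ 2 + numRad (twoA A) (blk 0 (X.comp S) (Y.comp T) 0) +
        max ((numRad A T) ^ 2) ((numRad A S) ^ 2) +
          (1 / 2) * max (opSNorm A (Ts.comp T + X.comp Xs)) (opSNorm A (Ss.comp S + Y.comp Ys)) := by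
  refine numRad_sq_le ?_ fun z hz => norm_sInner_blk_sq_le hA hT hS hX hY hTs hSs hXs hYs hz
  have := (sq_nonneg (numRad A T)).trans (le_max_left _ (numRad A S ^ 2))
  have := (opSNorm_nonneg A (Ts.comp T + X.comp Xs)).trans
    (le_max_left _ (opSNorm A (Ss.comp S + Y.comp Ys)))
  have := numRad_nonneg (twoA A) (blk 0 (X.comp S) (Y.comp T) 0)
  positivity
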